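/- arXiv:1307.6194 — 2 statements merged into one kernel-verified Lean document; each statement's English description precedes it below -/
import Mathlib

section
/- Let 1<r≤2, b>1/r and s>1+1/r. Then there is a constant C such that for all measurable F, G : ℝ×ℝ² → [0,∞], ‖F∗G‖_{L^{r'}(ℝ×ℝ², dτ dξ)} ≤ C ‖⟨ξ⟩ ⟨|τ|−|ξ|⟩^b F(τ,ξ)‖_{L^{r'}} ‖⟨ξ⟩^{s−1} G(τ,ξ)‖_{L^{r'}}. (On the Fourier side this is the product estimate ‖fg‖_{L̂^r_{t,x}} ≲ ‖f‖_{X^r_{1,b}} ‖g‖_{X^r_{s−1,0}} in dimension n = 2.) -/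
/-!
Hölder's inequality in `q` with the weight `w q * v (p - q)` bounds `(F ∗ G)(p) ^ r'` by
`K(p) ^ (r' / r)` times the convolution of `(w F) ^ r'` and `(v G) ^ r'`, where
`K(p) = ∫ (w q * v (p - q)) ^ (-r) dq`; integrating in `p` (Tonelli) gives the estimate as soon as
`K` is bounded. For `w = ⟨ξ⟩⟨|τ| - |ξ|⟩^b` and `v = ⟨ξ⟩^(s-1)`, the `τ`-integral of
`⟨|τ| - |ξ|⟩^(-br)` is finite since `br > 1`, and `∫ ⟨ξ⟩^(-r) ⟨η - ξ⟩^(-(s-1)r) dξ` is at most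
`2 ∫ ⟨ξ⟩^(-sr) dξ`, finite since `sr > 2 = dim ℝ²`.
-/

open MeasureTheory ENNReal NNReal

theorem ENNReal.lintegral_le_weighted_Lp_mul_Lq {α : Type*} [MeasurableSpace α] (μ : Measure α)
    {r r' : ℝ} (hrr' : r.HolderConjugate r') {ρ : α → ℝ} (hρ : Measurable ρ) (hρ0 : ∀ x, 0 < ρ x)
    {f : α → ℝ≥0∞} (hf : Measurable f) :
    ∫⁻ x, f x ∂μ ≤ (∫⁻ x, ENNReal.ofReal (ρ x ^ (-r)) ∂μ) ^ (1 / r) *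
      (∫⁻ x, (ENNReal.ofReal (ρ x) * f x) ^ r' ∂μ) ^ (1 / r') := by
  have hsplit : ∀ x, f x = ENNReal.ofReal (ρ x)⁻¹ * (ENNReal.ofReal (ρ x) * f x) := fun x ↦ by
    rw [← mul_assoc, ← ENNReal.ofReal_mul (inv_pos.2 (hρ0 x)).le,
      inv_mul_cancel₀ (hρ0 x).ne', ENNReal.ofReal_one, one_mul]
  have hinv : ∀ x, ENNReal.ofReal (ρ x)⁻¹ ^ r = ENNReal.ofReal (ρ x ^ (-r)) := fun x ↦ by
    rw [ENNReal.ofReal_rpow_of_pos (inv_pos.2 (hρ0 x)), Real.inv_rpow (hρ0 x).le,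
      Real.rpow_neg (hρ0 x).le]
  rw [lintegral_congr hsplit]
  simpa only [Pi.mul_apply, hinv] using ENNReal.lintegral_mul_le_Lp_mul_Lq μ hrr'
    (f := fun x ↦ ENNReal.ofReal (ρ x)⁻¹) (g := fun x ↦ ENNReal.ofReal (ρ x) * f x)
    (by fun_prop) (by fun_prop)

section Convolution

variable {G : Type*} [MeasurableSpace G] [AddGroup G] [MeasurableAdd₂ G] [MeasurableNeg G]
  {μ : Measure G} [SFinite μ] [μ.IsAddRightInvariant]

theorem lintegral_lintegral_mul_sub {f g : G → ℝ≥0∞} (hf : Measurable f) (hg : Measurable g) :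
    ∫⁻ p, ∫⁻ q, f q * g (p - q) ∂μ ∂μ = (∫⁻ q, f q ∂μ) * ∫⁻ p, g p ∂μ := by
  rw [lintegral_lintegral_swap ((hf.comp measurable_snd).mul
    (hg.comp (measurable_fst.sub measurable_snd))).aemeasurable]
  have hinner : ∀ q, ∫⁻ p, f q * g (p - q) ∂μ = f q * ∫⁻ p, g p ∂μ := fun q ↦ by
    rw [lintegral_const_mul _ (by fun_prop), lintegral_sub_right_eq_self g]
  simp_rw [hinner]
  exact lintegral_mul_const _ hf

theorem lintegral_convolution_rpow_le {r r' : ℝ} (hrr' : r.HolderConjugate r') {w v : G → ℝ}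
    (hw : Measurable w) (hv : Measurable v) (hw0 : ∀ x, 0 < w x) (hv0 : ∀ x, 0 < v x)
    {M : ℝ≥0∞} (hM : ∀ p, ∫⁻ q, ENNReal.ofReal ((w q * v (p - q)) ^ (-r)) ∂μ ≤ M)
    {f g : G → ℝ≥0∞} (hf : Measurable f) (hg : Measurable g) :
    (∫⁻ p, (∫⁻ q, f q * g (p - q) ∂μ) ^ r' ∂μ) ^ (1 / r') ≤
      M ^ (1 / r) * (∫⁻ p, (ENNReal.ofReal (w p) * f p) ^ r' ∂μ) ^ (1 / r') *
        (∫⁻ p, (ENNReal.ofReal (v p) * g p) ^ r' ∂μ) ^ (1 / r') := by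
  have hr : 0 < r := hrr'.pos
  have hr' : 0 < r' := hrr'.symm.pos
  set wf : G → ℝ≥0∞ := fun p ↦ (ENNReal.ofReal (w p) * f p) ^ r'
  set vg : G → ℝ≥0∞ := fun p ↦ (ENNReal.ofReal (v p) * g p) ^ r'
  have hpointwise : ∀ p, (∫⁻ q, f q * g (p - q) ∂μ) ^ r' ≤
      M ^ (r' / r) * ∫⁻ q, wf q * vg (p - q) ∂μ := fun p ↦ by
    have hsplit : ∀ q, (ENNReal.ofReal (w q * v (p - q)) * (f q * g (p - q))) ^ r' =
        wf q * vg (p - q) := fun q ↦ by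
      rw [ENNReal.ofReal_mul (hw0 q).le, mul_mul_mul_comm, ENNReal.mul_rpow_of_nonneg _ _ hr'.le]
    have hholder := ENNReal.lintegral_le_weighted_Lp_mul_Lq μ hrr' (ρ := fun q ↦ w q * v (p - q))
      (by fun_prop) (fun q ↦ mul_pos (hw0 q) (hv0 _)) (f := fun q ↦ f q * g (p - q)) (by fun_prop)
    simp only [hsplit] at hholder
    calc (∫⁻ q, f q * g (p - q) ∂μ) ^ r'
        ≤ (M ^ (1 / r) * (∫⁻ q, wf q * vg (p - q) ∂μ) ^ (1 / r')) ^ r' := by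
          gcongr
          exact hholder.trans (by gcongr; exact hM p)
      _ = M ^ (r' / r) * ∫⁻ q, wf q * vg (p - q) ∂μ := by
          rw [ENNReal.mul_rpow_of_nonneg _ _ hr'.le, ← ENNReal.rpow_mul, ← ENNReal.rpow_mul,
            one_div_mul_cancel hr'.ne', ENNReal.rpow_one, one_div_mul_eq_div]
  calc (∫⁻ p, (∫⁻ q, f q * g (p - q) ∂μ) ^ r' ∂μ) ^ (1 / r')
      ≤ (M ^ (r' / r) * ((∫⁻ p, wf p ∂μ) * ∫⁻ p, vg p ∂μ)) ^ (1 / r') := by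
        rw [← lintegral_lintegral_mul_sub (by fun_prop) (by fun_prop),
          ← lintegral_const_mul _ (by fun_prop)]
        gcongr with p
        exact hpointwise p
    _ = M ^ (1 / r) * (∫⁻ p, wf p ∂μ) ^ (1 / r') * (∫⁻ p, vg p ∂μ) ^ (1 / r') := by
        rw [ENNReal.mul_rpow_of_nonneg _ _ (by positivity),
          ENNReal.mul_rpow_of_nonneg _ _ (by positivity), ← ENNReal.rpow_mul, ← mul_assoc,
          show r' / r * (1 / r') = 1 / r by field_simp]

end Convolution

theorem Real.rpow_neg_mul_rpow_neg_le_add {A B a c : ℝ} (hA : 0 < A) (hB : 0 < B) (ha : 0 ≤ a)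
    (hc : 0 ≤ c) : A ^ (-a) * B ^ (-c) ≤ A ^ (-(a + c)) + B ^ (-(a + c)) := by
  rcases le_total A B with hAB | hBA
  · calc A ^ (-a) * B ^ (-c) ≤ A ^ (-a) * A ^ (-c) :=
          mul_le_mul_of_nonneg_left
            (Real.rpow_le_rpow_of_nonpos hA hAB (neg_nonpos.2 hc)) (by positivity)
      _ = A ^ (-(a + c)) := by rw [← Real.rpow_add hA, neg_add]
      _ ≤ _ := le_add_of_nonneg_right (by positivity)
  · calc A ^ (-a) * B ^ (-c) ≤ B ^ (-a) * B ^ (-c) :=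
          mul_le_mul_of_nonneg_right
            (Real.rpow_le_rpow_of_nonpos hB hBA (neg_nonpos.2 ha)) (by positivity)
      _ = B ^ (-(a + c)) := by rw [← Real.rpow_add hB, neg_add]
      _ ≤ _ := le_add_of_nonneg_left (by positivity)

theorem lintegral_one_add_norm_rpow_neg_mul_le {E : Type*} [NormedAddCommGroup E]
    [MeasurableSpace E] [BorelSpace E] {μ : Measure E} [μ.IsAddRightInvariant] {a c : ℝ}
    (ha : 0 ≤ a) (hc : 0 ≤ c) (z : E) :
    ∫⁻ x, ENNReal.ofReal ((1 + ‖x‖) ^ (-a) * (1 + ‖z - x‖) ^ (-c)) ∂μ ≤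
      2 * ∫⁻ x, ENNReal.ofReal ((1 + ‖x‖) ^ (-(a + c))) ∂μ := by
  calc ∫⁻ x, ENNReal.ofReal ((1 + ‖x‖) ^ (-a) * (1 + ‖z - x‖) ^ (-c)) ∂μ
      ≤ ∫⁻ x, (ENNReal.ofReal ((1 + ‖x‖) ^ (-(a + c))) +
          ENNReal.ofReal ((1 + ‖x - z‖) ^ (-(a + c)))) ∂μ := by
        gcongr with x
        rw [← ENNReal.ofReal_add (by positivity) (by positivity), norm_sub_rev]
        exact ENNReal.ofReal_le_ofReal
          (Real.rpow_neg_mul_rpow_neg_le_add (by positivity) (by positivity) ha hc)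
    _ = 2 * ∫⁻ x, ENNReal.ofReal ((1 + ‖x‖) ^ (-(a + c))) ∂μ := by
        rw [lintegral_add_left (by fun_prop),
          lintegral_sub_right_eq_self (fun x ↦ ENNReal.ofReal ((1 + ‖x‖) ^ (-(a + c)))), two_mul]

theorem lintegral_one_add_abs_abs_sub_rpow_neg_le (β c : ℝ) :
    ∫⁻ τ : ℝ, ENNReal.ofReal ((1 + |(|τ|) - c|) ^ (-β)) ≤
      2 * ∫⁻ u : ℝ, ENNReal.ofReal ((1 + |u|) ^ (-β)) := by
  have hsplit : ∀ τ : ℝ, ENNReal.ofReal ((1 + |(|τ|) - c|) ^ (-β)) ≤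
      ENNReal.ofReal ((1 + |τ - c|) ^ (-β)) + ENNReal.ofReal ((1 + |τ + c|) ^ (-β)) := fun τ ↦ by
    rcases le_or_gt 0 τ with hτ | hτ
    · rw [abs_of_nonneg hτ]; exact le_add_right le_rfl
    · rw [abs_of_neg hτ, ← abs_neg, neg_sub', neg_neg, sub_neg_eq_add]; exact le_add_left le_rfl
  calc ∫⁻ τ : ℝ, ENNReal.ofReal ((1 + |(|τ|) - c|) ^ (-β))
      ≤ ∫⁻ τ : ℝ, (ENNReal.ofReal ((1 + |τ - c|) ^ (-β)) +
          ENNReal.ofReal ((1 + |τ + c|) ^ (-β))) := lintegral_mono hsplit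
    _ = 2 * ∫⁻ u : ℝ, ENNReal.ofReal ((1 + |u|) ^ (-β)) := by
        rw [lintegral_add_left (by fun_prop),
          lintegral_sub_right_eq_self (fun u ↦ ENNReal.ofReal ((1 + |u|) ^ (-β))),
          lintegral_add_right_eq_self (fun u ↦ ENNReal.ofReal ((1 + |u|) ^ (-β))), two_mul]

theorem lintegral_prod_mul_le_of_forall_lintegral_le {α β : Type*} [MeasurableSpace α]
    [MeasurableSpace β] {μ : Measure α} {ν : Measure β} [SFinite μ] [SFinite ν]
    {f : β → ℝ≥0∞} {g : α × β → ℝ≥0∞} (hf : Measurable f) (hg : Measurable g) {C : ℝ≥0∞}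
    (hC : ∀ y, ∫⁻ x, g (x, y) ∂μ ≤ C) :
    ∫⁻ z, f z.2 * g z ∂μ.prod ν ≤ (∫⁻ y, f y ∂ν) * C := by
  rw [lintegral_prod_symm _ (by fun_prop), ← lintegral_mul_const _ hf]
  refine lintegral_mono fun y ↦ ?_
  change ∫⁻ x, f y * g (x, y) ∂μ ≤ f y * C
  rw [lintegral_const_mul _ (by fun_prop)]
  gcongr
  exact hC y

theorem lintegral_wave_weight_rpow_neg_le {E : Type*} [NormedAddCommGroup E] [MeasureSpace E]
    [BorelSpace E] [SFinite (volume : Measure E)] [(volume : Measure E).IsAddRightInvariant]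
    {s₁ s₂ b r : ℝ} (hs₁ : 0 ≤ s₁) (hs₂ : 0 ≤ s₂) (hr : 0 < r) (p : ℝ × E) :
    ∫⁻ q, ENNReal.ofReal (((1 + ‖q.2‖) ^ s₁ * (1 + |(|q.1|) - ‖q.2‖|) ^ b *
        (1 + ‖(p - q).2‖) ^ s₂) ^ (-r)) ≤
      2 * (∫⁻ x : E, ENNReal.ofReal ((1 + ‖x‖) ^ (-(s₁ * r + s₂ * r)))) *
        (2 * ∫⁻ u : ℝ, ENNReal.ofReal ((1 + |u|) ^ (-(b * r)))) := by
  have hsplit : ∀ q : ℝ × E, ENNReal.ofReal (((1 + ‖q.2‖) ^ s₁ * (1 + |(|q.1|) - ‖q.2‖|) ^ b *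
        (1 + ‖(p - q).2‖) ^ s₂) ^ (-r)) =
      ENNReal.ofReal ((1 + ‖q.2‖) ^ (-(s₁ * r)) * (1 + ‖p.2 - q.2‖) ^ (-(s₂ * r))) *
        ENNReal.ofReal ((1 + |(|q.1|) - ‖q.2‖|) ^ (-(b * r))) := fun q ↦ by
    rw [← ENNReal.ofReal_mul (by positivity), Prod.snd_sub, Real.mul_rpow (by positivity)
      (by positivity), Real.mul_rpow (by positivity) (by positivity), ← Real.rpow_mul
      (by positivity), ← Real.rpow_mul (by positivity), ← Real.rpow_mul (by positivity),
      mul_right_comm]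
    ring_nf
  simp_rw [hsplit]
  rw [Measure.volume_eq_prod]
  refine (lintegral_prod_mul_le_of_forall_lintegral_le
    (f := fun ξ ↦ ENNReal.ofReal ((1 + ‖ξ‖) ^ (-(s₁ * r)) * (1 + ‖p.2 - ξ‖) ^ (-(s₂ * r))))
    (g := fun q ↦ ENNReal.ofReal ((1 + |(|q.1|) - ‖q.2‖|) ^ (-(b * r))))
    (by fun_prop) (by fun_prop) fun ξ ↦ lintegral_one_add_abs_abs_sub_rpow_neg_le _ ‖ξ‖).trans ?_
  gcongr
  exact lintegral_one_add_norm_rpow_neg_mul_le (μ := volume) (mul_nonneg hs₁ hr.le)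
    (mul_nonneg hs₂ hr.le) p.2

instance Prod.instIsAddRightInvariantVolume {α β : Type*} [MeasureSpace α] [MeasureSpace β]
    [Add α] [Add β] [MeasurableAdd α] [MeasurableAdd β]
    [SFinite (volume : Measure α)] [SFinite (volume : Measure β)]
    [(volume : Measure α).IsAddRightInvariant] [(volume : Measure β).IsAddRightInvariant] :
    (volume : Measure (α × β)).IsAddRightInvariant :=
  Measure.prod.instIsAddRightInvariant

theorem product_estimate_X1b_general (r r' b s : ℝ) (hr : 1 < r)
    (hrr' : 1 / r + 1 / r' = 1) (hb : 1 / r < b) (hs : 1 + 1 / r < s) :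
    ∃ C : ℝ≥0, ∀ F G : ℝ × EuclideanSpace ℝ (Fin 2) → ℝ≥0∞,
      Measurable F → Measurable G →
      (∫⁻ p : ℝ × EuclideanSpace ℝ (Fin 2),
          (∫⁻ q : ℝ × EuclideanSpace ℝ (Fin 2), F q * G (p - q)) ^ r') ^ (1 / r')
        ≤ C * (∫⁻ p : ℝ × EuclideanSpace ℝ (Fin 2),
              ((ENNReal.ofReal (1 + ‖p.2‖) *
                ENNReal.ofReal ((1 + |(|p.1|) - ‖p.2‖|) ^ b)) * F p) ^ r') ^ (1 / r')
            * (∫⁻ p : ℝ × EuclideanSpace ℝ (Fin 2),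
              (ENNReal.ofReal ((1 + ‖p.2‖) ^ (s - 1)) * G p) ^ r') ^ (1 / r') := by
  have hconj : r.HolderConjugate r' :=
    Real.holderConjugate_iff.2 ⟨hr, by simpa only [one_div] using hrr'⟩
  have hr0 : 0 < r := by linarith
  have hbr : 1 < b * r := by rwa [div_lt_iff₀ hr0] at hb
  have hsr : 2 < r + (s - 1) * r := by
    have := mul_lt_mul_of_pos_right hs hr0
    rw [add_mul, one_div_mul_cancel hr0.ne'] at this
    linarith
  have hτ_finite := finite_integral_one_add_norm (E := ℝ) (μ := volume) (r := b * r)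
    (by simpa using hbr)
  have hξ_finite := finite_integral_one_add_norm (E := EuclideanSpace ℝ (Fin 2)) (μ := volume)
    (r := r + (s - 1) * r) (by simpa using hsr)
  set M : ℝ≥0∞ :=
    2 * (∫⁻ x : EuclideanSpace ℝ (Fin 2), ENNReal.ofReal ((1 + ‖x‖) ^ (-(r + (s - 1) * r)))) *
      (2 * ∫⁻ u : ℝ, ENNReal.ofReal ((1 + |u|) ^ (-(b * r))))
  refine ⟨(M ^ (1 / r)).toNNReal, fun F G hF hG ↦ ?_⟩
  rw [ENNReal.coe_toNNReal (by finiteness)]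
  have hw : ∀ p : ℝ × EuclideanSpace ℝ (Fin 2), ENNReal.ofReal (1 + ‖p.2‖) *
      ENNReal.ofReal ((1 + |(|p.1|) - ‖p.2‖|) ^ b) =
        ENNReal.ofReal ((1 + ‖p.2‖) * (1 + |(|p.1|) - ‖p.2‖|) ^ b) :=
    fun p ↦ (ENNReal.ofReal_mul (by positivity)).symm
  simp_rw [hw]
  refine lintegral_convolution_rpow_le hconj (by fun_prop) (by fun_prop)
    (fun p ↦ by positivity) (fun p ↦ by positivity) (fun p ↦ ?_) hF hG
  simpa only [Real.rpow_one, one_mul] using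
    lintegral_wave_weight_rpow_neg_le (s₁ := 1) (s₂ := s - 1) (b := b) zero_le_one
      (by linarith [one_div_pos.2 hr0]) hr0 p

/-- Fourier-side product estimate `‖fg‖_{L̂^r_{t,x}} ≲ ‖f‖_{X^r_{1,b}} ‖g‖_{X^r_{s−1,0}}`
in dimension `n = 2`: for `1 < r ≤ 2`, `b > 1/r` and `s > 1 + 1/r`,
`‖F∗G‖_{L^{r'}(ℝ×ℝ²)} ≤ C ‖⟨ξ⟩⟨|τ|−|ξ|⟩^b F‖_{L^{r'}} ‖⟨ξ⟩^{s−1} G‖_{L^{r'}}`. -/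
theorem product_estimate_X1b (r r' b s : ℝ) (hr : 1 < r) (hr2 : r ≤ 2)
    (hrr' : 1 / r + 1 / r' = 1) (hb : 1 / r < b) (hs : 1 + 1 / r < s) :
    ∃ C : ℝ≥0, ∀ F G : ℝ × EuclideanSpace ℝ (Fin 2) → ℝ≥0∞,
      Measurable F → Measurable G →
      (∫⁻ p : ℝ × EuclideanSpace ℝ (Fin 2),
          (∫⁻ q : ℝ × EuclideanSpace ℝ (Fin 2), F q * G (p - q)) ^ r') ^ (1 / r')
        ≤ C * (∫⁻ p : ℝ × EuclideanSpace ℝ (Fin 2),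
              ((ENNReal.ofReal (1 + ‖p.2‖) *
                ENNReal.ofReal ((1 + |(|p.1|) - ‖p.2‖|) ^ b)) * F p) ^ r') ^ (1 / r')
            * (∫⁻ p : ℝ × EuclideanSpace ℝ (Fin 2),
              (ENNReal.ofReal ((1 + ‖p.2‖) ^ (s - 1)) * G p) ^ r') ^ (1 / r') :=
  product_estimate_X1b_general r r' b s hr hrr' hb hs
end

section
/- Hyperbolic bound for the Q₁₂ symbol: for all nonzero η, ζ ∈ ℝ², writing ξ = η + ζ, one has |η∧ζ| ≤ 2·|ξ|^{1/2}·(|ξ| − ||η| − |ζ||)^{1/2}·|η|^{1/2}·|ζ|^{1/2}. Equivalently, |η∧ζ|/(|η||ζ|) ≤ 2·|ξ|^{1/2}(|ξ| − ||η|−|ζ||)^{1/2}/(|η|^{1/2}|ζ|^{1/2}). (By the triangle inequality ||η| − |ζ|| ≤ |ξ|, so the right-hand side is well defined.) -/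
/-!
Let `a = ‖η‖`, `b = ‖ζ‖`, `c = ‖η + ζ‖`. The wedge `η ∧ ζ` is twice the signed area of the triangle
with sides `a, b, c`, so Heron's formula gives `4 (η ∧ ζ)² = (c² - (a - b)²)((a + b)² - c²)`.
For `b ≤ a` this factors as `(c - (a - b)) · (c + a - b)(a + b - c) · (a + b + c)`, where the
triangle inequalities give `(c + a - b)(a + b - c) = a² - (c - b)² ≤ 4bc` and `a + b + c ≤ 4a`.
-/

open RealInnerProductSpace

lemma heron_product_le_of_le {a b c : ℝ} (hb : 0 ≤ b) (hba : b ≤ a) (hc : a - b ≤ c)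
    (hc' : c ≤ a + b) :
    (c ^ 2 - (a - b) ^ 2) * ((a + b) ^ 2 - c ^ 2) ≤ 16 * a * b * c * (c - (a - b)) := by
  have hgap : 0 ≤ c - (a - b) := by linarith
  have hc0 : 0 ≤ c := by linarith
  have hmid : (c + (a - b)) * (a + b - c) ≤ 4 * b * c := by
    nlinarith [mul_nonneg (by linarith : 0 ≤ b + c - a) (by linarith : 0 ≤ a + b + c)]
  have hsum : a + b + c ≤ 4 * a := by linarith
  calc (c ^ 2 - (a - b) ^ 2) * ((a + b) ^ 2 - c ^ 2)
      = (c - (a - b)) * ((c + (a - b)) * (a + b - c)) * (a + b + c) := by ring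
    _ ≤ (c - (a - b)) * (4 * b * c) * (4 * a) := by
      gcongr
      linarith
    _ = 16 * a * b * c * (c - (a - b)) := by ring

lemma heron_product_le {a b c : ℝ} (hc : |a - b| ≤ c) (hc' : c ≤ a + b) :
    (c ^ 2 - (a - b) ^ 2) * ((a + b) ^ 2 - c ^ 2) ≤ 16 * a * b * c * (c - |a - b|) := by
  have hab := abs_le.mp hc
  rcases le_total b a with hba | hab'
  · rw [abs_of_nonneg (sub_nonneg.mpr hba)] at hc ⊢
    exact heron_product_le_of_le (by linarith) hba hc hc'
  · rw [abs_of_nonpos (sub_nonpos.mpr hab'), neg_sub] at hc ⊢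
    have := heron_product_le_of_le (by linarith) hab' hc (by linarith)
    linarith

lemma abs_norm_sub_norm_le_norm_add {E : Type*} [SeminormedAddCommGroup E] (x y : E) :
    |‖x‖ - ‖y‖| ≤ ‖x + y‖ := by
  simpa [sub_neg_eq_add] using abs_norm_sub_norm_le x (-y)

lemma div_mul_le_div_sqrt_mul_sqrt {x K a b : ℝ} (ha : 0 ≤ a) (hb : 0 ≤ b)
    (h : x ≤ K * Real.sqrt a * Real.sqrt b) :
    x / (a * b) ≤ K / (Real.sqrt a * Real.sqrt b) := by
  set s := Real.sqrt a * Real.sqrt b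
  have hs : a * b = s * s := by
    rw [mul_mul_mul_comm, Real.mul_self_sqrt ha, Real.mul_self_sqrt hb]
  rw [hs]
  calc x / (s * s) ≤ K * s / (s * s) := by
        rw [mul_assoc] at h
        exact div_le_div_of_nonneg_right h (mul_self_nonneg s)
    _ = K / s := by
        rcases eq_or_ne s 0 with hs0 | hs0
        · simp [hs0]
        · rw [mul_div_mul_right K s hs0]

namespace EuclideanSpace

def wedge (η ζ : EuclideanSpace ℝ (Fin 2)) : ℝ := η 0 * ζ 1 - η 1 * ζ 0

variable (η ζ : EuclideanSpace ℝ (Fin 2))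

lemma wedge_sq_add_inner_sq : wedge η ζ ^ 2 + ⟪η, ζ⟫ ^ 2 = ‖η‖ ^ 2 * ‖ζ‖ ^ 2 := by
  simp only [wedge, ← real_inner_self_eq_norm_sq, PiLp.inner_apply, Fin.sum_univ_two,
    RCLike.inner_apply, conj_trivial]
  ring

lemma four_mul_wedge_sq_eq_heron :
    4 * wedge η ζ ^ 2
      = (‖η + ζ‖ ^ 2 - (‖η‖ - ‖ζ‖) ^ 2) * ((‖η‖ + ‖ζ‖) ^ 2 - ‖η + ζ‖ ^ 2) := by
  linear_combination 4 * wedge_sq_add_inner_sq η ζ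
    - ((‖η‖ - ‖ζ‖) ^ 2 + (‖η‖ + ‖ζ‖) ^ 2 - ‖η + ζ‖ ^ 2 - (‖η‖ ^ 2 + 2 * ⟪η, ζ⟫ + ‖ζ‖ ^ 2))
      * norm_add_sq_real η ζ

lemma wedge_sq_le :
    wedge η ζ ^ 2 ≤ 4 * ‖η‖ * ‖ζ‖ * ‖η + ζ‖ * (‖η + ζ‖ - |‖η‖ - ‖ζ‖|) := by
  have := heron_product_le (abs_norm_sub_norm_le_norm_add η ζ) (norm_add_le η ζ)
  linarith [four_mul_wedge_sq_eq_heron η ζ]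

lemma abs_wedge_le :
    |wedge η ζ| ≤ 2 * Real.sqrt ‖η + ζ‖ * Real.sqrt (‖η + ζ‖ - |‖η‖ - ‖ζ‖|) *
      Real.sqrt ‖η‖ * Real.sqrt ‖ζ‖ := by
  have hgap : 0 ≤ ‖η + ζ‖ - |‖η‖ - ‖ζ‖| := sub_nonneg.mpr (abs_norm_sub_norm_le_norm_add η ζ)
  have hbound := Real.abs_le_sqrt (wedge_sq_le η ζ)
  rw [Real.sqrt_mul' _ hgap, Real.sqrt_mul' _ (norm_nonneg _), Real.sqrt_mul' _ (norm_nonneg _),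
    Real.sqrt_mul' _ (norm_nonneg _), show Real.sqrt 4 = 2 by norm_num] at hbound
  linarith

end EuclideanSpace

theorem Q12_symbol_hyperbolic_bound_general (η ζ : EuclideanSpace ℝ (Fin 2)) :
    |η 0 * ζ 1 - η 1 * ζ 0|
        ≤ 2 * Real.sqrt ‖η + ζ‖ * Real.sqrt (‖η + ζ‖ - |‖η‖ - ‖ζ‖|) *
            Real.sqrt ‖η‖ * Real.sqrt ‖ζ‖
    ∧ |η 0 * ζ 1 - η 1 * ζ 0| / (‖η‖ * ‖ζ‖)
        ≤ 2 * Real.sqrt ‖η + ζ‖ * Real.sqrt (‖η + ζ‖ - |‖η‖ - ‖ζ‖|) /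
            (Real.sqrt ‖η‖ * Real.sqrt ‖ζ‖) :=
  have hwedge := EuclideanSpace.abs_wedge_le η ζ
  ⟨hwedge, div_mul_le_div_sqrt_mul_sqrt (norm_nonneg _) (norm_nonneg _) hwedge⟩

/-- Hyperbolic bound for the `Q₁₂` symbol: for nonzero `η, ζ ∈ ℝ²` and `ξ = η + ζ`,
`|η∧ζ| ≤ 2·|ξ|^{1/2}(|ξ| − ||η|−|ζ||)^{1/2}|η|^{1/2}|ζ|^{1/2}`, equivalently
`|η∧ζ|/(|η||ζ|) ≤ 2·|ξ|^{1/2}(|ξ| − ||η|−|ζ||)^{1/2}/(|η|^{1/2}|ζ|^{1/2})`. -/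
theorem Q12_symbol_hyperbolic_bound (η ζ : EuclideanSpace ℝ (Fin 2))
    (hη : η ≠ 0) (hζ : ζ ≠ 0) :
    |η 0 * ζ 1 - η 1 * ζ 0|
        ≤ 2 * Real.sqrt ‖η + ζ‖ * Real.sqrt (‖η + ζ‖ - |‖η‖ - ‖ζ‖|) *
            Real.sqrt ‖η‖ * Real.sqrt ‖ζ‖
    ∧ |η 0 * ζ 1 - η 1 * ζ 0| / (‖η‖ * ‖ζ‖)
        ≤ 2 * Real.sqrt ‖η + ζ‖ * Real.sqrt (‖η + ζ‖ - |‖η‖ - ‖ζ‖|) /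
            (Real.sqrt ‖η‖ * Real.sqrt ‖ζ‖) :=
  Q12_symbol_hyperbolic_bound_general η ζ
end
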